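/- arXiv:math/9902101 — 2 statements merged into one kernel-verified Lean document; each statement's English description precedes it below -/
import Mathlib

section
/- On the subspace 𝔪₊ = Span{E₁₃−E₂₃, E₁₄−E₂₄} ⊂ 𝔬(3,1), the linear map J defined by J(E₁₃−E₂₃) = −(E₁₄−E₂₄) and J(E₁₄−E₂₄) = E₁₃−E₂₃ is a complex structure (J² = −id), and it is equivariant under the adjoint action of the stabilizer algebra 𝔥₊ modulo 𝔥₊: for all h ∈ 𝔥₊ and m ∈ 𝔪₊, [h, Jm] − J[h,m] ∈ 𝔥₊. -/
open Matrix

/-- The signs `ε₁ = -1`, `ε₂ = ε₃ = ε₄ = 1` of the Minkowski form (0-indexed). -/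
def eps : Fin 4 → ℝ := fun i => if i = 0 then -1 else 1

/-- The standard generators `E_ij` of `𝔬(3,1)`. -/
def EM (i j : Fin 4) : Matrix (Fin 4) (Fin 4) ℝ :=
  Matrix.of fun k l =>
    if k = j ∧ l = i then eps i else if k = i ∧ l = j then -(eps j) else 0

/-- `𝔥₊ = Span{E₁₂, E₁₃+E₂₃, E₁₄+E₂₄, E₃₄}` (0-indexed). -/
noncomputable def hplus : Submodule ℝ (Matrix (Fin 4) (Fin 4) ℝ) :=
  Submodule.span ℝ {EM 0 1, EM 0 2 + EM 1 2, EM 0 3 + EM 1 3, EM 2 3}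

/-- First basis vector `a = E₁₃ − E₂₃` of `𝔪₊` (0-indexed). -/
noncomputable def aM : Matrix (Fin 4) (Fin 4) ℝ := EM 0 2 - EM 1 2

/-- Second basis vector `b = E₁₄ − E₂₄` of `𝔪₊` (0-indexed). -/
noncomputable def bM : Matrix (Fin 4) (Fin 4) ℝ := EM 0 3 - EM 1 3

/-- In coordinates `m = x•a + y•b` of `𝔪₊`, the map `J` with `J a = -b`, `J b = a`
is `(x, y) ↦ (y, -x)`. -/
def Jc (p : ℝ × ℝ) : ℝ × ℝ := (p.2, -p.1)

/-! Modulo `𝔥₊`, the brackets with the generators of `𝔥₊` act on `𝔪₊ = span {a, b}` as the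
identity (`E₁₂`), as zero (`E₁₃ + E₂₃`, `E₁₄ + E₂₄`) and as a rotation by a right angle (`E₃₄`).
Each of these is multiplication by a complex number in the coordinates where `J` is
multiplication by `-i`, and such operators form a subspace, so all of `ad 𝔥₊` commutes with `J`
modulo `𝔥₊`. -/

namespace LieAlgebra

variable {R L : Type*} [CommRing R] [LieRing L] [LieAlgebra R L]

/-- Modulo `H`, `ad h` acts on `span {a, b} ≅ ℂ` (`a ↦ 1`, `b ↦ i`) as multiplication by
`p + i q`. -/
def complexLinearModulo (H : Submodule R L) (a b : L) : Submodule R L where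
  carrier := {h | ∃ p q : R, ⁅h, a⁆ - (p • a + q • b) ∈ H ∧ ⁅h, b⁆ - ((-q) • a + p • b) ∈ H}
  zero_mem' := ⟨0, 0, by simp, by simp⟩
  add_mem' := by
    rintro h₁ h₂ ⟨p₁, q₁, ha₁, hb₁⟩ ⟨p₂, q₂, ha₂, hb₂⟩
    refine ⟨p₁ + p₂, q₁ + q₂, ?_, ?_⟩
    · convert H.add_mem ha₁ ha₂ using 1
      simp only [add_lie]; module
    · convert H.add_mem hb₁ hb₂ using 1
      simp only [add_lie]; module
  smul_mem' := by
    rintro c h ⟨p, q, ha, hb⟩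
    refine ⟨c * p, c * q, ?_, ?_⟩
    · convert H.smul_mem c ha using 1
      simp only [smul_lie]; module
    · convert H.smul_mem c hb using 1
      simp only [smul_lie]; module

variable {H : Submodule R L} {a b h : L}

theorem exists_lie_sub_mem_of_mem_complexLinearModulo (hh : h ∈ complexLinearModulo H a b)
    (x y : R) : ∃ x' y' : R,
      ⁅h, x • a + y • b⁆ - (x' • a + y' • b) ∈ H ∧
      ⁅h, y • a + (-x) • b⁆ - (y' • a + (-x') • b) ∈ H := by
  obtain ⟨p, q, ha, hb⟩ := hh
  refine ⟨p * x - q * y, q * x + p * y, ?_, ?_⟩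
  · convert H.add_mem (H.smul_mem x ha) (H.smul_mem y hb) using 1
    simp only [lie_add, lie_smul]; module
  · convert H.add_mem (H.smul_mem y ha) (H.smul_mem (-x) hb) using 1
    simp only [lie_add, lie_smul]; module

theorem mem_complexLinearModulo_of_lie_mem (ha : ⁅h, a⁆ ∈ H) (hb : ⁅h, b⁆ ∈ H) :
    h ∈ complexLinearModulo H a b :=
  ⟨0, 0, by simpa using ha, by simpa using hb⟩

end LieAlgebra

section MinkowskiBrackets

open LieAlgebra

attribute [local instance] LieRing.ofAssociativeRing

theorem EM01_lie_aM : ⁅EM 0 1, aM⁆ = aM := by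
  ext i j
  fin_cases i <;> fin_cases j <;> simp [Ring.lie_def, Matrix.mul_apply, EM, aM, eps]

theorem EM01_lie_bM : ⁅EM 0 1, bM⁆ = bM := by
  ext i j
  fin_cases i <;> fin_cases j <;> simp [Ring.lie_def, Matrix.mul_apply, EM, bM, eps]

theorem EM02_add_EM12_lie_aM : ⁅EM 0 2 + EM 1 2, aM⁆ = (-2 : ℝ) • EM 0 1 := by
  ext i j
  fin_cases i <;> fin_cases j <;>
    simp [Ring.lie_def, Matrix.mul_apply, Fin.sum_univ_four, EM, aM, eps] <;> norm_num

theorem EM02_add_EM12_lie_bM : ⁅EM 0 2 + EM 1 2, bM⁆ = (-2 : ℝ) • EM 2 3 := by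
  ext i j
  fin_cases i <;> fin_cases j <;>
    simp [Ring.lie_def, Matrix.mul_apply, Fin.sum_univ_four, EM, bM, eps] <;> norm_num

theorem EM03_add_EM13_lie_aM : ⁅EM 0 3 + EM 1 3, aM⁆ = (2 : ℝ) • EM 2 3 := by
  ext i j
  fin_cases i <;> fin_cases j <;>
    simp [Ring.lie_def, Matrix.mul_apply, Fin.sum_univ_four, EM, aM, eps] <;> norm_num

theorem EM03_add_EM13_lie_bM : ⁅EM 0 3 + EM 1 3, bM⁆ = (-2 : ℝ) • EM 0 1 := by
  ext i j
  fin_cases i <;> fin_cases j <;>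
    simp [Ring.lie_def, Matrix.mul_apply, Fin.sum_univ_four, EM, bM, eps] <;> norm_num

theorem EM23_lie_aM : ⁅EM 2 3, aM⁆ = bM := by
  ext i j
  fin_cases i <;> fin_cases j <;> simp [Ring.lie_def, Matrix.mul_apply, EM, aM, bM, eps]

theorem EM23_lie_bM : ⁅EM 2 3, bM⁆ = -aM := by
  ext i j
  fin_cases i <;> fin_cases j <;> simp [Ring.lie_def, Matrix.mul_apply, EM, aM, bM, eps]

theorem hplus_le_complexLinearModulo : hplus ≤ complexLinearModulo hplus aM bM := by
  have hE01 : EM 0 1 ∈ hplus := Submodule.subset_span (by simp)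
  have hE23 : EM 2 3 ∈ hplus := Submodule.subset_span (by simp)
  refine Submodule.span_le.mpr ?_
  rintro h (rfl | rfl | rfl | rfl)
  · exact ⟨1, 0, by simp [EM01_lie_aM], by simp [EM01_lie_bM]⟩
  · exact mem_complexLinearModulo_of_lie_mem
      (EM02_add_EM12_lie_aM ▸ hplus.smul_mem _ hE01) (EM02_add_EM12_lie_bM ▸ hplus.smul_mem _ hE23)
  · exact mem_complexLinearModulo_of_lie_mem
      (EM03_add_EM13_lie_aM ▸ hplus.smul_mem _ hE23) (EM03_add_EM13_lie_bM ▸ hplus.smul_mem _ hE01)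
  · exact ⟨0, 1, by simp [EM23_lie_aM], by simp [EM23_lie_bM]⟩

end MinkowskiBrackets

/-- The map `J(E₁₃−E₂₃) = −(E₁₄−E₂₄)`, `J(E₁₄−E₂₄) = E₁₃−E₂₃` is a complex structure on
`𝔪₊` (i.e. `J² = -id`), and it is `ad(𝔥₊)`-equivariant modulo `𝔥₊`:
for `h ∈ 𝔥₊` and `m ∈ 𝔪₊` one has `[h, Jm] − J[h,m] ∈ 𝔥₊`, where `J[h,m]` denotes `J`
applied to the `𝔪₊`-component of `[h,m]`. -/
theorem complex_structure_on_mplus_equivariant_mod_hplus :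
    (∀ p : ℝ × ℝ, Jc (Jc p) = -p) ∧
    (∀ h ∈ hplus, ∀ x y : ℝ, ∃ x' y' : ℝ,
      ⁅h, x • aM + y • bM⁆ - (x' • aM + y' • bM) ∈ hplus ∧
      ⁅h, y • aM + (-x) • bM⁆ - (y' • aM + (-x') • bM) ∈ hplus) := by
  let := LieRing.ofAssociativeRing (A := Matrix (Fin 4) (Fin 4) ℝ)
  exact ⟨fun _ => rfl, fun h hh =>
    LieAlgebra.exists_lie_sub_mem_of_mem_complexLinearModulo (hplus_le_complexLinearModulo hh)⟩
end

section
/- For a smooth function λ on the hyperbolic plane H² = {y ∈ ℝ³ : −y₁² + y₂² + y₃² = −1, y₁ > 0}, the map i_λ : H² → ℝ⁵₂, (y₁,y₂,y₃) ↦ (y₁, λ, λ, y₂, y₃), takes values in the pseudohyperbolic space H⁴₁ = {x ∈ ℝ⁵₂ : ⟨x,x⟩⁵₂ = −1} and is an isometric immersion of H² into H⁴₁. -/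
/-- The bilinear form of signature (3,2) on `ℝ⁵`. -/
def B52 (x y : Fin 5 → ℝ) : ℝ :=
  -(x 0 * y 0) - x 1 * y 1 + x 2 * y 2 + x 3 * y 3 + x 4 * y 4

/-- The Lorentzian bilinear form `−y₁y₁' + y₂y₂' + y₃y₃'` on `ℝ³`, inducing the hyperbolic
metric on `H² = {⟨y,y⟩ = −1, y₁ > 0}`. -/
def q3 (v w : Fin 3 → ℝ) : ℝ := -(v 0 * w 0) + v 1 * w 1 + v 2 * w 2

/-- The map `i_λ : (y₁,y₂,y₃) ↦ (y₁, λ, λ, y₂, y₃)` from `ℝ³ ⊃ H²` to `ℝ⁵₂`. -/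
noncomputable def hypImm (f : (Fin 3 → ℝ) → ℝ) : (Fin 3 → ℝ) → (Fin 5 → ℝ) :=
  fun y => ![y 0, f y, f y, y 1, y 2]

lemma hypImm_hasFDerivAt (f : (Fin 3 → ℝ) → ℝ) (hf : ContDiff ℝ (⊤ : ℕ∞) f) (y : Fin 3 → ℝ) :
    HasFDerivAt (hypImm f)
      (ContinuousLinearMap.pi
        ![ContinuousLinearMap.proj 0, fderiv ℝ f y, fderiv ℝ f y,
          ContinuousLinearMap.proj 1, ContinuousLinearMap.proj 2]) y := by
  rw [hasFDerivAt_pi']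
  intro i
  have hfd : HasFDerivAt f (fderiv ℝ f y) y :=
    (hf.differentiable (by simp) y).hasFDerivAt
  fin_cases i <;> simp [hypImm] <;>
    first
      | exact (ContinuousLinearMap.proj 0 : (Fin 3 → ℝ) →L[ℝ] ℝ).hasFDerivAt
      | exact hfd
      | exact (ContinuousLinearMap.proj 1 : (Fin 3 → ℝ) →L[ℝ] ℝ).hasFDerivAt
      | exact (ContinuousLinearMap.proj 2 : (Fin 3 → ℝ) →L[ℝ] ℝ).hasFDerivAt

/-- For a smooth function `λ`, the map `i_λ : H² → ℝ⁵₂`, `(y₁,y₂,y₃) ↦ (y₁, λ, λ, y₂, y₃)`,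
takes values in the pseudohyperbolic space `H⁴₁ = {⟨x,x⟩⁵₂ = −1}` and is an isometric
immersion of the hyperbolic plane `H²` into `H⁴₁`. -/
theorem hyperbolic_graph_immersion_isometric (f : (Fin 3 → ℝ) → ℝ) (hf : ContDiff ℝ (⊤ : ℕ∞) f) :
    (∀ y : Fin 3 → ℝ, q3 y y = -1 → 0 < y 0 →
      B52 (hypImm f y) (hypImm f y) = -1) ∧
    (∀ y v w : Fin 3 → ℝ, q3 y y = -1 → 0 < y 0 → q3 y v = 0 → q3 y w = 0 →
      B52 (fderiv ℝ (hypImm f) y v) (fderiv ℝ (hypImm f) y w) = q3 v w) := by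
  constructor
  · intro y hy _
    simp only [hypImm, B52, q3] at *
    simp [Matrix.cons_val_zero, Matrix.cons_val_one]
    linarith
  · intro y v w hy _ hv hw
    rw [(hypImm_hasFDerivAt f hf y).fderiv]
    simp [B52, q3] at *
end
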